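/- arXiv:2410.04728 — 3 statements merged into one kernel-verified Lean document; each statement's English description precedes it below -/
import Mathlib

section
/- For every positive integer n, g(n) is not prime. -/
/-- `Corr n k` says there is a square-product sequence (a nonempty finite set of
positive integers whose product is a perfect square) with least term `n` and
greatest term `k`. -/
def Corr (n k : ℕ) : Prop :=
  ∃ S : Finset ℕ, (∀ a ∈ S, 0 < a) ∧ IsSquare (∏ a ∈ S, a) ∧
    n ∈ S ∧ k ∈ S ∧ ∀ a ∈ S, n ≤ a ∧ a ≤ k

/-- Ron Graham's sequence: the least `k` such that there is a square-product
sequence with least term `n` and greatest term `k`. -/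
noncomputable def g (n : ℕ) : ℕ := sInf {k | Corr n k}

/-!
The greatest term `p` of any square-product sequence `S` (in particular `g n`, which exists
because `n, 4n` is one) is not prime: a prime `p` would divide the product of `S` exactly once,
since every other term of `S` is positive and smaller than `p`, whereas a perfect square is
divisible by a prime an even number of times.
-/

theorem Nat.Prime.dvd_of_isSquare_mul {p m : ℕ} (hp : p.Prime) (h : IsSquare (p * m)) :
    p ∣ m := by
  obtain ⟨r, hr⟩ := h
  obtain ⟨s, rfl⟩ : p ∣ r := hp.dvd_mul.mp (hr ▸ dvd_mul_right p m) |>.elim id id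
  have : p * m = p * (p * (s * s)) := by rw [hr]; ring
  exact ⟨s * s, Nat.eq_of_mul_eq_mul_left hp.pos this⟩

theorem corr_four_mul {n : ℕ} (hn : 0 < n) : Corr n (4 * n) := by
  have hne : n ≠ 4 * n := by omega
  refine ⟨{n, 4 * n}, ?_, ?_, by simp, by simp, ?_⟩
  · simp only [Finset.mem_insert, Finset.mem_singleton]
    rintro a (rfl | rfl) <;> omega
  · rw [Finset.prod_pair hne]
    exact ⟨2 * n, by ring⟩
  · simp only [Finset.mem_insert, Finset.mem_singleton]
    rintro a (rfl | rfl) <;> omega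

theorem corr_g {n : ℕ} (hn : 0 < n) : Corr n (g n) :=
  Nat.sInf_mem (s := {k | Corr n k}) ⟨4 * n, corr_four_mul hn⟩

theorem not_prime_of_corr {n p : ℕ} (h : Corr n p) : ¬ p.Prime := by
  intro hp
  obtain ⟨S, hpos, hsq, -, hpS, hbd⟩ := h
  rw [← Finset.mul_prod_erase S (fun a => a) hpS] at hsq
  obtain ⟨a, ha, hpa⟩ := hp.prime.exists_mem_finset_dvd (hp.dvd_of_isSquare_mul hsq)
  have haS := Finset.mem_of_mem_erase ha
  have hap : a ≤ p := (hbd a haS).2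
  exact Finset.ne_of_mem_erase ha (le_antisymm hap (Nat.le_of_dvd (hpos a haS) hpa))

theorem g_not_prime (n : ℕ) (hn : 0 < n) : ¬ (g n).Prime :=
  not_prime_of_corr (corr_g hn)
end

section
/- Ron Graham's sequence is surjective onto the positive non-prime integers: for every positive integer k that is not prime, there exists a positive integer n with g(n) = k. -/
lemma Corr.le' {n k : ℕ} (h : Corr n k) : n ≤ k := by
  obtain ⟨S, _, _, hn, hkk, hb⟩ := h
  exact (hb k hkk).1

lemma isSquare_of_mul_sq {c d : ℕ} (hd : d ≠ 0) (h : IsSquare (c * d ^ 2)) :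
    IsSquare c := by
  obtain ⟨s, hs⟩ := h
  have hds : d ∣ s := by
    have h2 : d ^ 2 ∣ s ^ 2 := ⟨c, by rw [sq, ← hs]; ring⟩
    exact (Nat.pow_dvd_pow_iff two_ne_zero).mp h2
  obtain ⟨e, rfl⟩ := hds
  refine ⟨e, ?_⟩
  have h3 : c * d ^ 2 = (e * e) * d ^ 2 := by rw [hs]; ring
  exact Nat.eq_of_mul_eq_mul_right (by positivity) h3

lemma prod_symmDiff_mul_sq (S S' : Finset ℕ) :
    (∏ a ∈ symmDiff S S', a) * (∏ a ∈ S ∩ S', a) ^ 2 =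
    (∏ a ∈ S, a) * (∏ a ∈ S', a) := by
  classical
  have h1 : (∏ a ∈ S \ S', a) * (∏ a ∈ S ∩ S', a) = ∏ a ∈ S, a := by
    rw [← Finset.sdiff_inter_self_left S S']
    exact Finset.prod_sdiff (Finset.inter_subset_left)
  have h2 : (∏ a ∈ S' \ S, a) * (∏ a ∈ S ∩ S', a) = ∏ a ∈ S', a := by
    rw [Finset.inter_comm, ← Finset.sdiff_inter_self_left S' S]
    exact Finset.prod_sdiff (Finset.inter_subset_left)
  rw [symmDiff_def, Finset.sup_eq_union, Finset.prod_union disjoint_sdiff_sdiff, sq, ← h1, ← h2]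
  ring

theorem g_surjective (k : ℕ) (hk : 0 < k) (hk' : ¬ k.Prime) :
    ∃ n : ℕ, 0 < n ∧ g n = k := by
  classical
  -- Step 1: the set {n | Corr n k} is nonempty.
  have hA : ∃ n, Corr n k := by
    by_cases hs : IsSquare k
    · refine ⟨k, {k}, ?_, ?_, ?_, ?_, ?_⟩ <;> simp [hk, hs]
    · have hk2 : 2 ≤ k := by
        rcases Nat.lt_or_ge k 2 with h | h
        · have hk1 : k = 1 := by omega
          subst hk1
          exact absurd (⟨1, rfl⟩ : IsSquare 1) hs
        · exact h
      obtain ⟨m, hmdvd, hm2, hmk⟩ := Nat.exists_dvd_of_not_prime2 hk2 hk'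
      set b := k / m with hbdef
      have hb : m * b = k := Nat.mul_div_cancel' hmdvd
      have hb1 : 1 < b := by
        rcases Nat.lt_or_ge b 2 with h | h
        · interval_cases b
          · simp at hb; omega
          · omega
        · omega
      have hbk : b < k := by nlinarith
      have hmb : m ≠ b := by
        intro h
        exact hs ⟨m, by rw [← hb, h]⟩
      -- use {x, y, k} with {x,y} = {m,b}, x < y
      have key : ∀ x y : ℕ, x * y = k → 1 < x → x < y → y < k → ∃ n, Corr n k := by
        intro x y hxy hx1 hxy' hyk
        have hxny : x ≠ y := hxy'.ne
        have hxnk : x ≠ k := by omega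
        have hynk : y ≠ k := by omega
        refine ⟨x, {x, y, k}, ?_, ?_, ?_, ?_, ?_⟩
        · intro a ha
          simp only [Finset.mem_insert, Finset.mem_singleton] at ha
          rcases ha with rfl | rfl | rfl <;> omega
        · have hprod : (∏ a ∈ ({x, y, k} : Finset ℕ), a) = x * (y * k) := by
            rw [Finset.prod_insert (by simp [hxny, hxnk]),
              Finset.prod_insert (by simp [hynk]), Finset.prod_singleton]
          rw [hprod]
          exact ⟨k, by rw [← hxy]; ring⟩
        · simp
        · simp
        · intro a ha
          simp only [Finset.mem_insert, Finset.mem_singleton] at ha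
          rcases ha with rfl | rfl | rfl <;> omega
      rcases lt_or_gt_of_ne hmb with h | h
      · exact key m b hb hm2 h hbk
      · exact key b m (by rw [mul_comm]; exact hb) hb1 h hmk
  -- Step 2: let N be the largest n with Corr n k; then g N = k.
  have hbdd : BddAbove {n | Corr n k} := ⟨k, fun n hn => hn.le'⟩
  set N := sSup {n | Corr n k} with hNdef
  have hNk : Corr N k := Nat.sSup_mem hA hbdd
  obtain ⟨S, hSpos, hSsq, hNS, hkS, hSb⟩ := hNk
  refine ⟨N, hSpos N hNS, ?_⟩
  have hmemg : Corr N k := ⟨S, hSpos, hSsq, hNS, hkS, hSb⟩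
  have hle : g N ≤ k := Nat.sInf_le (show k ∈ {k' | Corr N k'} from hmemg)
  have hinf_mem : Corr N (g N) := Nat.sInf_mem (⟨k, hmemg⟩ : {k' | Corr N k'}.Nonempty)
  rcases eq_or_lt_of_le hle with h | h
  · exact h
  · exfalso
    obtain ⟨S', hS'pos, hS'sq, hNS', hk'S', hS'b⟩ := hinf_mem
    set T := symmDiff S S' with hTdef
    have hkT : k ∈ T := by
      refine Finset.mem_symmDiff.mpr (Or.inl ⟨hkS, fun hmem => ?_⟩)
      have := (hS'b k hmem).2
      omega
    have hTne : T.Nonempty := ⟨k, hkT⟩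
    have hNnotT : N ∉ T := by
      intro hmem
      rcases Finset.mem_symmDiff.mp hmem with ⟨_, h2⟩ | ⟨_, h2⟩
      · exact h2 hNS'
      · exact h2 hNS
    have hTbounds : ∀ a ∈ T, N ≤ a ∧ a ≤ k := by
      intro a ha
      rcases Finset.mem_symmDiff.mp ha with ⟨h1, _⟩ | ⟨h1, _⟩
      · exact hSb a h1
      · exact ⟨(hS'b a h1).1, le_trans (hS'b a h1).2 h.le⟩
    have hTpos : ∀ a ∈ T, 0 < a := fun a ha =>
      lt_of_lt_of_le (hSpos N hNS) (hTbounds a ha).1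
    have hDpos : 0 < ∏ a ∈ S ∩ S', a :=
      Finset.prod_pos fun a ha => hSpos a (Finset.mem_of_mem_inter_left ha)
    have hTsq : IsSquare (∏ a ∈ T, a) := by
      apply isSquare_of_mul_sq hDpos.ne'
      rw [hTdef, prod_symmDiff_mul_sq]
      exact hSsq.mul hS'sq
    have hmT : T.min' hTne ∈ T := T.min'_mem hTne
    have hCorr : Corr (T.min' hTne) k :=
      ⟨T, hTpos, hTsq, hmT, hkT, fun a ha => ⟨T.min'_le a ha, (hTbounds a ha).2⟩⟩
    have hmle : T.min' hTne ≤ N := le_csSup hbdd hCorr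
    have hgt : N < T.min' hTne :=
      lt_of_le_of_ne (hTbounds _ hmT).1 fun e => hNnotT (e ▸ hmT)
    omega
end

section
/- Let n be a positive integer that is not a perfect square, and write n = m·r² with m squarefree (so m ≥ 2). Then g(n) ≤ m·r² + m·r + r + 1. -/
theorem g_le_of_corr {n k : ℕ} (h : Corr n k) : g n ≤ k :=
  Nat.sInf_le h

theorem Finset.prod_four_of_lt {α M : Type*} [LinearOrder α] [CommMonoid M] (f : α → M)
    {a b c d : α} (hab : a < b) (hbc : b < c) (hcd : c < d) :
    ∏ x ∈ {a, b, c, d}, f x = f a * f b * f c * f d := by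
  have hbd := hbc.trans hcd
  rw [Finset.prod_insert (by simp [hab.ne, (hab.trans hbc).ne, (hab.trans hbd).ne]),
    Finset.prod_insert (by simp [hbc.ne, hbd.ne]), Finset.prod_pair hcd.ne, mul_assoc, mul_assoc]

theorem corr_of_lt_of_isSquare_mul {a b c d : ℕ} (ha : 0 < a) (hab : a < b) (hbc : b < c)
    (hcd : c < d) (hsq : IsSquare (a * b * c * d)) : Corr a d := by
  refine ⟨{a, b, c, d}, ?_, by rwa [Finset.prod_four_of_lt (fun x : ℕ => x) hab hbc hcd],
    by simp, by simp, ?_⟩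
  all_goals
    intro x hx
    simp only [Finset.mem_insert, Finset.mem_singleton] at hx
    omega

theorem two_le_and_pos_of_not_isSquare_mul_sq {m r : ℕ} (h : ¬IsSquare (m * r ^ 2)) :
    2 ≤ m ∧ 0 < r := by
  refine ⟨?_, Nat.pos_of_ne_zero fun hr => h ⟨0, by simp [hr]⟩⟩
  by_contra! hm
  interval_cases m
  · exact h ⟨0, by simp⟩
  · exact h ⟨r, by ring⟩

theorem g_upper_bound_general (n m r : ℕ) (hns : ¬ IsSquare n)
    (hnmr : n = m * r ^ 2) :
    g n ≤ m * r ^ 2 + m * r + r + 1 := by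
  subst hnmr
  obtain ⟨hm, hr⟩ := two_le_and_pos_of_not_isSquare_mul_sq hns
  have hrm : r < m * r := by nlinarith
  apply g_le_of_corr
  refine corr_of_lt_of_isSquare_mul (b := m * r ^ 2 + r) (c := m * r ^ 2 + m * r)
    (by positivity) (by omega) (by omega) (by omega) ?_
  exact ⟨m * r ^ 2 * (m * r + 1) * (r + 1), by ring⟩

theorem g_upper_bound (n m r : ℕ) (hn : 0 < n) (hns : ¬ IsSquare n)
    (hnmr : n = m * r ^ 2) (hm : Squarefree m) :
    g n ≤ m * r ^ 2 + m * r + r + 1 :=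
  g_upper_bound_general n m r hns hnmr
end
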